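/- arXiv:2104.10601 — 4 statements merged into one kernel-verified Lean document; each statement's English description precedes it below -/
import Mathlib

section
/- (Lemma 3(a)) Let Δ ⊆ ℝ^{d_δ} be compact and nonempty. The map φ: l^∞(Δ) → ℝ given by φ(x) = sup_{δ∈Δ} x(δ) is Hadamard directionally differentiable at any x ∈ C(Δ) tangentially to C(Δ), with derivative φ'_x(h) = sup_{δ∈Δ_0(x)} h(δ), where Δ_0(x) = {δ_0 ∈ Δ : x(δ_0) = sup_{δ∈Δ} x(δ)}. -/
open Filter Topology
open scoped ENNReal

noncomputable section

/-- The map `φ : X_D → Y` is Hadamard directionally differentiable at `x ∈ X_D`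
tangentially to `X₀ ⊆ X`, with derivative `φ'` (only the values of `φ'` on `X₀` matter):
for all sequences `hₙ → h ∈ X₀` and `tₙ ↓ 0` (positive reals) with `x + tₙ hₙ ∈ X_D`
for all `n`, `(φ(x + tₙ hₙ) − φ(x))/tₙ → φ'(h)`. -/
def HadamardDirDiffAt {X Y : Type*} [NormedAddCommGroup X] [NormedSpace ℝ X]
    [NormedAddCommGroup Y] [NormedSpace ℝ Y]
    (XD X₀ : Set X) (φ : X → Y) (x : X) (φ' : X → Y) : Prop :=
  ∀ h ∈ X₀, ∀ (hn : ℕ → X) (tn : ℕ → ℝ),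
    (∀ n, 0 < tn n) → Antitone tn → Filter.Tendsto tn Filter.atTop (nhds 0) →
    Filter.Tendsto hn Filter.atTop (nhds h) → (∀ n, x + tn n • hn n ∈ XD) →
    Filter.Tendsto (fun n => (tn n)⁻¹ • (φ (x + tn n • hn n) - φ x))
      Filter.atTop (nhds (φ' h))

/-!
The supremum functional is `1`-Lipschitz on `l^∞(Δ)`, so Hadamard differentiability reduces to
one-sided directional differentiability along each fixed continuous direction `h`. Evaluating at
the maximisers `Δ₀` of `x` bounds the difference quotient below by `sup_{Δ₀} h`. For the upper
bound, `x` stays some `η > 0` below its maximum on the compact set where `h ≥ sup_{Δ₀} h + ε`,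
and this gap absorbs `t h` for small `t`.
-/

theorem HadamardDirDiffAt.of_lipschitzWith {X Y : Type*} [NormedAddCommGroup X] [NormedSpace ℝ X]
    [NormedAddCommGroup Y] [NormedSpace ℝ Y] {XD X₀ : Set X} {φ φ' : X → Y} {x : X} {K : NNReal}
    (hφ : LipschitzWith K φ)
    (hdir : ∀ h ∈ X₀, Tendsto (fun t : ℝ => t⁻¹ • (φ (x + t • h) - φ x)) (𝓝[>] 0) (𝓝 (φ' h))) :
    HadamardDirDiffAt XD X₀ φ x φ' := by
  intro h hh hn tn htpos _ htto hhn _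
  have htn : Tendsto tn atTop (𝓝[>] 0) :=
    tendsto_nhdsWithin_iff.2 ⟨htto, Eventually.of_forall htpos⟩
  have hdist : ∀ n, dist ((tn n)⁻¹ • (φ (x + tn n • h) - φ x))
      ((tn n)⁻¹ • (φ (x + tn n • hn n) - φ x)) ≤ K * ‖hn n - h‖ := fun n => by
    have ht := htpos n
    calc _ = (tn n)⁻¹ * dist (φ (x + tn n • h)) (φ (x + tn n • hn n)) := by
          rw [dist_smul₀, dist_sub_right, Real.norm_of_nonneg (inv_nonneg.2 ht.le)]
      _ ≤ (tn n)⁻¹ * (K * dist (x + tn n • h) (x + tn n • hn n)) := by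
          gcongr; exact hφ.dist_le_mul _ _
      _ = K * ‖hn n - h‖ := by
          rw [dist_add_left, dist_smul₀, Real.norm_of_nonneg ht.le, dist_comm, dist_eq_norm]
          field_simp
  have hlim : Tendsto (fun n => (K : ℝ) * ‖hn n - h‖) atTop (𝓝 0) := by
    simpa using (tendsto_iff_norm_sub_tendsto_zero.1 hhn).const_mul (K : ℝ)
  exact ((hdir h hh).comp htn).congr_dist (squeeze_zero (fun _ => dist_nonneg) hdist hlim)

namespace lp

variable {ι : Type*}

theorem bddAbove_range_infty (y : lp (fun _ : ι => ℝ) ∞) : BddAbove (Set.range fun i => y i) :=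
  ⟨‖y‖, by
    rintro _ ⟨i, rfl⟩
    exact (le_abs_self _).trans (norm_apply_le_norm ENNReal.top_ne_zero y i)⟩

theorem lipschitzWith_one_iSup [Nonempty ι] :
    LipschitzWith 1 fun y : lp (fun _ : ι => ℝ) ∞ => ⨆ i, y i :=
  LipschitzWith.of_le_add fun y z => ciSup_le fun i => by
    have hz := le_ciSup (bddAbove_range_infty z) i
    have hyz := (le_abs_self _).trans (norm_apply_le_norm ENNReal.top_ne_zero (y - z) i)
    rw [coeFn_sub, Pi.sub_apply] at hyz
    rw [dist_eq_norm]
    linarith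

end lp

section

variable {ι : Type*} [TopologicalSpace ι] [CompactSpace ι] [Nonempty ι] {x h : ι → ℝ}

theorem Continuous.exists_eq_ciSup (hx : Continuous x) : ∃ i, x i = ⨆ j, x j := by
  obtain ⟨i, -, hi⟩ := isCompact_univ.exists_isMaxOn Set.univ_nonempty hx.continuousOn
  exact ⟨i, le_antisymm (le_ciSup (isCompact_range hx).bddAbove i)
    (ciSup_le fun j => hi (Set.mem_univ j))⟩

theorem ciSup_argmax_le_inv_mul_ciSup_add_mul_sub (hx : Continuous x)
    (hh : Continuous h) {t : ℝ} (ht : 0 < t) :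
    ⨆ i : {i | x i = ⨆ j, x j}, h i ≤ t⁻¹ * ((⨆ i, (x i + t * h i)) - ⨆ i, x i) := by
  obtain ⟨i₀, hi₀⟩ := hx.exists_eq_ciSup
  have : Nonempty {i | x i = ⨆ j, x j} := ⟨⟨i₀, hi₀⟩⟩
  refine ciSup_le fun ⟨i, hi⟩ => ?_
  have := le_ciSup (f := fun j => x j + t * h j) (isCompact_range (by fun_prop)).bddAbove i
  rw [le_inv_mul_iff₀ ht]
  linarith [show x i = ⨆ j, x j from hi]

theorem eventually_ciSup_add_mul_le (hx : Continuous x) (hh : Continuous h) {ε : ℝ}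
    (hε : 0 < ε) :
    ∀ᶠ t in 𝓝[>] (0 : ℝ), ⨆ i, (x i + t * h i) ≤
      (⨆ i, x i) + t * ((⨆ i : {i | x i = ⨆ j, x j}, h i) + ε) := by
  set M := ⨆ i, x i
  set ψ := ⨆ i : {i | x i = M}, h i
  have hxM : ∀ i, x i ≤ M := le_ciSup (isCompact_range hx).bddAbove
  obtain ⟨B, hB⟩ := (isCompact_range hh).bddAbove
  set K := {i | ψ + ε ≤ h i}
  have hK : IsCompact K := (isClosed_le continuous_const hh).isCompact
  have hKM : ∀ i ∈ K, 0 < M - x i := fun i hi => by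
    refine sub_pos.2 (lt_of_le_of_ne (hxM i) fun hxi => ?_)
    have := le_ciSup (f := fun j : {i | x i = M} => h j)
      ((isCompact_range hh).bddAbove.mono (Set.range_comp_subset_range _ h)) ⟨i, hxi⟩
    linarith [show ψ + ε ≤ h i from hi]
  obtain ⟨η, hη, hηK⟩ := hK.exists_forall_le' (continuous_const.sub hx).continuousOn hKM
  have hsmall : ∀ᶠ t in 𝓝 (0 : ℝ), t * (B - ψ - ε) < η := by
    have : Tendsto (fun t : ℝ => t * (B - ψ - ε)) (𝓝 0) (𝓝 0) := by
      simpa using (tendsto_id (x := 𝓝 (0 : ℝ))).mul_const (B - ψ - ε)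
    exact this.eventually (gt_mem_nhds hη)
  filter_upwards [nhdsWithin_le_nhds hsmall, self_mem_nhdsWithin] with t htη (ht : 0 < t)
  refine ciSup_le fun i => ?_
  by_cases hi : i ∈ K
  · have : η ≤ M - x i := hηK i hi
    have := hB ⟨i, rfl⟩
    nlinarith
  · have : h i < ψ + ε := lt_of_not_ge hi
    have := hxM i
    nlinarith

theorem tendsto_inv_mul_ciSup_add_mul_sub (hx : Continuous x) (hh : Continuous h) :
    Tendsto (fun t : ℝ => t⁻¹ * ((⨆ i, (x i + t * h i)) - ⨆ i, x i)) (𝓝[>] 0)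
      (𝓝 (⨆ i : {i | x i = ⨆ j, x j}, h i)) := by
  refine tendsto_order.2 ⟨fun a ha => ?_, fun a ha => ?_⟩
  · filter_upwards [self_mem_nhdsWithin] with t ht
    exact ha.trans_le (ciSup_argmax_le_inv_mul_ciSup_add_mul_sub hx hh ht)
  · filter_upwards [eventually_ciSup_add_mul_le hx hh (half_pos (sub_pos.2 ha)),
      self_mem_nhdsWithin] with t hle (ht : 0 < t)
    rw [inv_mul_lt_iff₀ ht]
    nlinarith

end

/-- Lemma 3(a): for compact nonempty `Δ ⊆ ℝ^{dδ}`, the map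
`φ : l^∞(Δ) → ℝ`, `φ(x) = sup_{δ∈Δ} x(δ)`, is Hadamard directionally differentiable at
any continuous `x` tangentially to `C(Δ)`, with derivative
`φ'_x(h) = sup_{δ∈Δ₀(x)} h(δ)` where `Δ₀(x) = {δ₀ ∈ Δ : x(δ₀) = sup_{δ∈Δ} x(δ)}`.
Here `l^∞(Δ)` is modeled as `lp (fun _ : Δ => ℝ) ∞`, the bounded real functions on `Δ`
with the supremum norm, and `C(Δ)` as its subset of continuous functions. -/
theorem statement_6 {dδ : ℕ} (Δ : Set (EuclideanSpace ℝ (Fin dδ)))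
    (hΔc : IsCompact Δ) (hΔne : Δ.Nonempty)
    (φ : lp (fun _ : ↥Δ => ℝ) ∞ → ℝ)
    (hφ : ∀ x : lp (fun _ : ↥Δ => ℝ) ∞, φ x = ⨆ δ : ↥Δ, x δ)
    (x : lp (fun _ : ↥Δ => ℝ) ∞)
    (hx : Continuous fun δ : ↥Δ => x δ) :
    HadamardDirDiffAt Set.univ
      {y : lp (fun _ : ↥Δ => ℝ) ∞ | Continuous fun δ : ↥Δ => y δ}
      φ x
      (fun h => ⨆ δ : ↥{δ₀ : ↥Δ | x δ₀ = ⨆ δ' : ↥Δ, x δ'}, h δ.1) := by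
  have : CompactSpace Δ := isCompact_iff_compactSpace.mp hΔc
  have : Nonempty Δ := hΔne.to_subtype
  obtain rfl : φ = fun y => ⨆ δ, y δ := funext hφ
  refine .of_lipschitzWith lp.lipschitzWith_one_iSup fun h hh => ?_
  simpa only [lp.coeFn_add, lp.coeFn_smul, Pi.add_apply, Pi.smul_apply, smul_eq_mul]
    using tendsto_inv_mul_ciSup_add_mul_sub hx hh

end
end

section
/- Let Γ ⊆ ℝ^{d_γ} and Δ ⊆ ℝ^{d_δ} be compact and nonempty, let f ∈ C(Γ×Δ), and suppose Θ_0(f) = {(γ_{01},δ_{01}),…,(γ_{0K},δ_{0K})} is a finite set with K ≥ 1 points satisfying γ_{0i} ≠ γ_{0j} and δ_{0i} ≠ δ_{0j} for all i ≠ j. Then for every k, Δ_0(γ_{0k},f) = {δ_{0k}}, and for every h ∈ C(Γ×Δ), sup_{(γ_0,δ_0)∈Θ_0(f)} { sup_{δ∈Δ_0(γ_0,f)} h(γ_0,δ) − min{ h(γ_0,δ_0), inf_{γ∈Γ_0(f)} sup_{δ∈Δ_0(γ,f)} h(γ,δ) } } = max_{k=1,…,K} h(γ_{0k},δ_{0k})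 − min_{k=1,…,K} h(γ_{0k},δ_{0k}). -/
/-! On `Γ₀(f)` the max-function equals the optimal value, so there `Δ₀(γ, f)` consists exactly
of the `δ` with `(γ, δ) ∈ Θ₀(f)`; distinct `γ₀ₖ` make it the singleton `{δ₀ₖ}`. Every supremum
over `Δ₀` is then a point evaluation, the infimum over `Γ₀(f)` is `minₖ h(γ₀ₖ, δ₀ₖ)`, and as this
lies below each `h(γ₀ₖ, δ₀ₖ)` the `min` in each term of the outer supremum is that minimum. -/

open Filter Topology

noncomputable section

variable {G D : Type*}

/-- The max-function `x̄(γ) = sup_{δ∈Δ} x(γ,δ)` (the index types `G`, `D` play the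
role of the compact parameter sets `Γ` and `Δ`). -/
noncomputable def phiOf (x : G × D → ℝ) (γ : G) : ℝ := ⨆ δ : D, x (γ, δ)

/-- The optimal value `inf_{γ∈Γ} x̄(γ)`. -/
noncomputable def VOf (x : G × D → ℝ) : ℝ := ⨅ γ : G, phiOf x γ

/-- `Θ₀(x)`: the set of minimax solutions of `x`. -/
def Theta0Of (x : G × D → ℝ) : Set (G × D) :=
  {p | x p = phiOf x p.1 ∧ phiOf x p.1 = VOf x}

/-- `Γ₀(x)`: first coordinates of minimax solutions. -/
def Gamma0Of (x : G × D → ℝ) : Set G := {γ | ∃ δ, (γ, δ) ∈ Theta0Of x}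

/-- `Δ₀(γ,x)`: the set of maximizers of `x(γ,·)`. -/
def Delta0Of (x : G × D → ℝ) (γ : G) : Set D := {δ | x (γ, δ) = phiOf x γ}

section MinimaxSolutions

variable {x : G × D → ℝ}

theorem Delta0Of_eq_of_mem_Gamma0Of {γ : G} (hγ : γ ∈ Gamma0Of x) :
    Delta0Of x γ = {δ | (γ, δ) ∈ Theta0Of x} := by
  obtain ⟨_, -, hV⟩ := hγ
  ext δ
  simp [Delta0Of, Theta0Of, hV]

theorem Gamma0Of_eq_image_fst : Gamma0Of x = Prod.fst '' Theta0Of x := by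
  ext γ
  simp [Gamma0Of]

variable {ι : Type*} {γ₀ : ι → G} {δ₀ : ι → D}

theorem Gamma0Of_eq_range (hΘ : Theta0Of x = Set.range fun k => (γ₀ k, δ₀ k)) :
    Gamma0Of x = Set.range γ₀ := by
  rw [Gamma0Of_eq_image_fst, hΘ, ← Set.range_comp]
  rfl

theorem Delta0Of_eq_singleton (hγ : Function.Injective γ₀)
    (hΘ : Theta0Of x = Set.range fun k => (γ₀ k, δ₀ k)) (k : ι) :
    Delta0Of x (γ₀ k) = {δ₀ k} := by
  rw [Delta0Of_eq_of_mem_Gamma0Of (Gamma0Of_eq_range hΘ ▸ Set.mem_range_self k), hΘ]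
  ext δ
  simp [hγ.eq_iff, eq_comm]

end MinimaxSolutions

theorem ciSup_sub_min_ciInf {ι α : Type*} [Finite ι] [Nonempty ι]
    [ConditionallyCompleteLinearOrder α] [AddCommGroup α] [IsOrderedAddMonoid α] (g : ι → α) :
    ⨆ i, (g i - min (g i) (⨅ j, g j)) = (⨆ i, g i) - ⨅ i, g i := by
  have hmin : ∀ i, min (g i) (⨅ j, g j) = ⨅ j, g j :=
    fun i => min_eq_right (ciInf_le (Set.finite_range g).bddBelow i)
  simp only [hmin]
  exact ((OrderIso.subRight _).map_ciSup (Set.finite_range g).bddAbove).symm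

theorem statement_14_general {dγ dδ : ℕ}
    (Γ : Set (EuclideanSpace ℝ (Fin dγ))) (Δ : Set (EuclideanSpace ℝ (Fin dδ)))
    (f : ↥Γ × ↥Δ → ℝ)
    (K : ℕ) (hK : 1 ≤ K) (γ₀ : Fin K → ↥Γ) (δ₀ : Fin K → ↥Δ)
    (hγinj : Function.Injective γ₀)
    (hΘ₀ : Theta0Of f = Set.range fun k => (γ₀ k, δ₀ k)) :
    (∀ k, Delta0Of f (γ₀ k) = {δ₀ k}) ∧
      ∀ h : ↥Γ × ↥Δ → ℝ, Continuous h →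
        (⨆ p : ↥(Theta0Of f),
            ((⨆ δ : ↥(Delta0Of f p.1.1), h (p.1.1, δ.1)) -
              min (h p.1) (⨅ γ : ↥(Gamma0Of f), ⨆ δ : ↥(Delta0Of f γ.1), h (γ.1, δ.1)))) =
          (⨆ k : Fin K, h (γ₀ k, δ₀ k)) - ⨅ k : Fin K, h (γ₀ k, δ₀ k) := by
  have hΔ₀ := Delta0Of_eq_singleton hγinj hΘ₀
  refine ⟨hΔ₀, fun h _ => ?_⟩
  have hsup : ∀ k, ⨆ δ : ↥(Delta0Of f (γ₀ k)), h (γ₀ k, δ.1) = h (γ₀ k, δ₀ k) := by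
    intro k
    rw [hΔ₀ k]
    exact ciSup_unique
  have : Nonempty (Fin K) := ⟨⟨0, hK⟩⟩
  rw [Gamma0Of_eq_range hΘ₀, iInf_range' (fun γ => ⨆ δ : ↥(Delta0Of f γ), h (γ, δ.1)), hΘ₀]
  rw [iSup_range' (fun p => (⨆ δ : ↥(Delta0Of f p.1), h (p.1, δ.1)) - min (h p) _)]
  simp only [hsup]
  exact ciSup_sub_min_ciInf _

/-- Γ, Δ compact nonempty, `f ∈ C(Γ×Δ)`, and `Θ₀(f)` a finite set
`{(γ₀₁,δ₀₁),…,(γ₀K,δ₀K)}` of `K ≥ 1` points with pairwise distinct `γ`'s and pairwise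
distinct `δ`'s.  Then `Δ₀(γ₀ₖ,f) = {δ₀ₖ}` for every `k`, and for every continuous `h`,
`sup_{(γ₀,δ₀)∈Θ₀(f)} { sup_{δ∈Δ₀(γ₀,f)} h(γ₀,δ) − min{ h(γ₀,δ₀),
inf_{γ∈Γ₀(f)} sup_{δ∈Δ₀(γ,f)} h(γ,δ) } } = max_k h(γ₀ₖ,δ₀ₖ) − min_k h(γ₀ₖ,δ₀ₖ)`. -/
theorem statement_14 {dγ dδ : ℕ}
    (Γ : Set (EuclideanSpace ℝ (Fin dγ))) (Δ : Set (EuclideanSpace ℝ (Fin dδ)))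
    (hΓc : IsCompact Γ) (hΔc : IsCompact Δ) (hΓne : Γ.Nonempty) (hΔne : Δ.Nonempty)
    (f : ↥Γ × ↥Δ → ℝ) (hf : Continuous f)
    (K : ℕ) (hK : 1 ≤ K) (γ₀ : Fin K → ↥Γ) (δ₀ : Fin K → ↥Δ)
    (hγinj : Function.Injective γ₀) (hδinj : Function.Injective δ₀)
    (hΘ₀ : Theta0Of f = Set.range fun k => (γ₀ k, δ₀ k)) :
    (∀ k, Delta0Of f (γ₀ k) = {δ₀ k}) ∧
      ∀ h : ↥Γ × ↥Δ → ℝ, Continuous h →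
        (⨆ p : ↥(Theta0Of f),
            ((⨆ δ : ↥(Delta0Of f p.1.1), h (p.1.1, δ.1)) -
              min (h p.1) (⨅ γ : ↥(Gamma0Of f), ⨆ δ : ↥(Delta0Of f γ.1), h (γ.1, δ.1)))) =
          (⨆ k : Fin K, h (γ₀ k, δ₀ k)) - ⨅ k : Fin K, h (γ₀ k, δ₀ k) :=
  statement_14_general Γ Δ f K hK γ₀ δ₀ hγinj hΘ₀

end
end

section
/- (Deterministic validity of the step-down procedure) Let Θ be a nonempty set, T: Θ → ℝ a bounded function, Θ_0 ⊆ Θ nonempty, and c: 𝒫(Θ)∖{∅} → ℝ a set function that is monotone under inclusion (S ⊆ S' implies c(S) ≤ c(S')). Define S_1 = Θ and S_{j+1} = {θ ∈ Θ : T(θ) ≤ c(S_j)} for j ≥ 1. Suppose j* ≥ 1 is an index with sup_{θ∈S_{j*}} T(θ) ≤ c(S_{j*}) (the procedure's stopping criterion). If Θ_0 ⊄ S_{j*}, then sup_{θ∈Θ_0} T(θ) > c(Θ_0). Consequently, if sup_{θ∈Θ_0} T(θ) ≤ c(Θ_0), then Θ_0 ⊆ S_{j*}. -/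
/-! If `T ≤ c Θ₀` on `Θ₀`, then `Θ₀` survives every step of the procedure: once `Θ₀ ⊆ S j`,
monotonicity gives `T θ ≤ c Θ₀ ≤ c (S j)` for `θ ∈ Θ₀`, i.e. `Θ₀ ⊆ S (j + 1)`.
The first claim is the contrapositive of the second. -/

theorem subset_stepDown_of_forall_le {Θ α : Type*} [Preorder α] {T : Θ → α} {c : Set Θ → α}
    {S : ℕ → Set Θ} (hS1 : S 1 = Set.univ)
    (hSrec : ∀ j : ℕ, 1 ≤ j → S (j + 1) = {θ | T θ ≤ c (S j)})
    {A : Set Θ} (hcA : ∀ S' : Set Θ, A ⊆ S' → c A ≤ c S') (hTA : ∀ θ ∈ A, T θ ≤ c A)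
    {j : ℕ} (hj : 1 ≤ j) : A ⊆ S j := by
  induction j, hj using Nat.le_induction with
  | base => exact hS1 ▸ Set.subset_univ A
  | succ j hj hAj =>
    rw [hSrec j hj]
    exact fun θ hθ => (hTA θ hθ).trans (hcA _ hAj)

theorem statement_15_general {Θ : Type*}
    (T : Θ → ℝ) (hT : ∃ M : ℝ, ∀ θ, |T θ| ≤ M)
    (Θ₀ : Set Θ) (hΘ₀ : Θ₀.Nonempty)
    (c : Set Θ → ℝ)
    (hmono : ∀ S S' : Set Θ, S.Nonempty → S ⊆ S' → c S ≤ c S')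
    (S : ℕ → Set Θ) (hS1 : S 1 = Set.univ)
    (hSrec : ∀ j : ℕ, 1 ≤ j → S (j + 1) = {θ | T θ ≤ c (S j)})
    (jstar : ℕ) (hjstar : 1 ≤ jstar) :
    (¬ Θ₀ ⊆ S jstar → c Θ₀ < ⨆ θ : ↥Θ₀, T θ.1) ∧
      ((⨆ θ : ↥Θ₀, T θ.1) ≤ c Θ₀ → Θ₀ ⊆ S jstar) := by
  obtain ⟨M, hM⟩ := hT
  have hbdd : BddAbove (Set.range fun θ : ↥Θ₀ => T θ.1) :=
    ⟨M, by rintro _ ⟨θ, rfl⟩; exact (abs_le.mp (hM θ)).2⟩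
  have hsubset : (⨆ θ : ↥Θ₀, T θ.1) ≤ c Θ₀ → Θ₀ ⊆ S jstar := fun hle =>
    subset_stepDown_of_forall_le hS1 hSrec (hmono Θ₀ · hΘ₀)
      (fun θ hθ => (le_ciSup hbdd ⟨θ, hθ⟩).trans hle) hjstar
  exact ⟨fun hnot => lt_of_not_ge (mt hsubset hnot), hsubset⟩

/-- deterministic validity of the step-down procedure: `Θ` is a nonempty
set, `T : Θ → ℝ` a bounded function, `Θ₀ ⊆ Θ` nonempty, and `c` a set function monotone
under inclusion (on nonempty sets).  With `S 1 = Θ` and `S (j+1) = {θ : T θ ≤ c (S j)}`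
for `j ≥ 1`, if `j* ≥ 1` satisfies the stopping criterion `sup_{θ∈S j*} T θ ≤ c (S j*)`,
then: `Θ₀ ⊄ S j*` implies `sup_{θ∈Θ₀} T θ > c Θ₀`; consequently
`sup_{θ∈Θ₀} T θ ≤ c Θ₀` implies `Θ₀ ⊆ S j*`. -/
theorem statement_15 {Θ : Type*} [Nonempty Θ]
    (T : Θ → ℝ) (hT : ∃ M : ℝ, ∀ θ, |T θ| ≤ M)
    (Θ₀ : Set Θ) (hΘ₀ : Θ₀.Nonempty)
    (c : Set Θ → ℝ)
    (hmono : ∀ S S' : Set Θ, S.Nonempty → S ⊆ S' → c S ≤ c S')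
    (S : ℕ → Set Θ) (hS1 : S 1 = Set.univ)
    (hSrec : ∀ j : ℕ, 1 ≤ j → S (j + 1) = {θ | T θ ≤ c (S j)})
    (jstar : ℕ) (hjstar : 1 ≤ jstar)
    (hstop : (⨆ θ : ↥(S jstar), T θ.1) ≤ c (S jstar)) :
    (¬ Θ₀ ⊆ S jstar → c Θ₀ < ⨆ θ : ↥Θ₀, T θ.1) ∧
      ((⨆ θ : ↥Θ₀, T θ.1) ≤ c Θ₀ → Θ₀ ⊆ S jstar) :=
  statement_15_general T hT Θ₀ hΘ₀ c hmono S hS1 hSrec jstar hjstar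
end

section
/- Let Γ ⊆ ℝ^{d_γ} and Δ ⊆ ℝ^{d_δ} be compact and nonempty, let x, h ∈ C(Γ×Δ) with Θ_0(x) nonempty, let {t_n} ⊂ (0,∞) with t_n ↓ 0, and define the difference quotients D_n = t_n^{-1} [ inf_{γ∈Γ} sup_{δ∈Δ} (x + t_n h)(γ,δ) − inf_{γ∈Γ} sup_{δ∈Δ} x(γ,δ) ]. Then limsup_{n→∞} D_n ≤ inf_{γ∈Γ_0(x)} sup_{δ∈Δ_0(γ,x)} h(γ,δ). -/
open Filter Topology

noncomputable section

variable {G D : Type*}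

/-!
Fix `γ₀ ∈ Γ₀(x)` and let `δₙ` maximize `(x + tₙ h)(γ₀, ·)`. Evaluating the perturbed minimax
value at `γ₀` bounds the `n`-th difference quotient above by `h(γ₀, δₙ)`, and `h ≥ min h` bounds
it below. Passing to the limit in `x(γ₀, δ) + tₙ h(γ₀, δ) ≤ x(γ₀, δₙ) + tₙ h(γ₀, δₙ)` shows that
every cluster point of `(δₙ)` maximizes `x(γ₀, ·)`, i.e. lies in `Δ₀(γ₀, x)`; by compactness
`h(γ₀, δₙ)` is therefore eventually below any `b > sup_{Δ₀(γ₀, x)} h(γ₀, ·)`.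
-/

open Set

section Values

variable {G D : Type*} {x y : G × D → ℝ}

theorem phiOf_eq_of_isMaxOn {γ : G} {δ₀ : D} (hδ₀ : IsMaxOn (fun δ => x (γ, δ)) univ δ₀) :
    phiOf x γ = x (γ, δ₀) :=
  have : Nonempty D := ⟨δ₀⟩
  ciSup_eq_of_forall_le_of_forall_lt_exists_gt (fun δ => hδ₀ (mem_univ δ)) fun _ hw => ⟨δ₀, hw⟩

theorem mem_Delta0Of_of_isMaxOn {γ : G} {δ₀ : D} (hδ₀ : IsMaxOn (fun δ => x (γ, δ)) univ δ₀) :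
    δ₀ ∈ Delta0Of x γ :=
  (phiOf_eq_of_isMaxOn hδ₀).symm

theorem phiOf_eq_VOf_of_mem_Gamma0Of {γ : G} (hγ : γ ∈ Gamma0Of x) : phiOf x γ = VOf x :=
  hγ.choose_spec.2

theorem VOf_sub_VOf_le (hy : BddBelow (range (phiOf y)))
    {γ₀ : G} (hγ₀ : γ₀ ∈ Gamma0Of x) (hx : BddAbove (range fun δ => x (γ₀, δ)))
    {δ₀ : D} (hδ₀ : IsMaxOn (fun δ => y (γ₀, δ)) univ δ₀) :
    VOf y - VOf x ≤ y (γ₀, δ₀) - x (γ₀, δ₀) := by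
  have hVy : VOf y ≤ y (γ₀, δ₀) := (ciInf_le hy γ₀).trans (phiOf_eq_of_isMaxOn hδ₀).le
  have hVx : x (γ₀, δ₀) ≤ VOf x := (le_ciSup hx δ₀).trans (phiOf_eq_VOf_of_mem_Gamma0Of hγ₀).le
  linarith

theorem VOf_add_le_VOf [Nonempty G] [Nonempty D] (hx : BddBelow (range (phiOf x)))
    (hy : ∀ γ, BddAbove (range fun δ => y (γ, δ))) {c : ℝ} (hxy : ∀ p, x p + c ≤ y p) :
    VOf x + c ≤ VOf y := by
  refine le_ciInf fun γ => ?_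
  have hphi : phiOf x γ ≤ phiOf y γ - c :=
    ciSup_le fun δ => le_sub_iff_add_le.mpr ((hxy (γ, δ)).trans (le_ciSup (hy γ) δ))
  have hV : VOf x ≤ phiOf x γ := ciInf_le hx γ
  linarith

end Values

section Compact

variable {G D : Type*} [TopologicalSpace G] [TopologicalSpace D] {x : G × D → ℝ}

theorem bddAbove_range_slice [CompactSpace D] (hx : Continuous x) (γ : G) :
    BddAbove (range fun δ => x (γ, δ)) :=
  (isCompact_range (hx.comp (Continuous.prodMk_right γ))).bddAbove

theorem continuous_phiOf [CompactSpace D] (hx : Continuous x) : Continuous (phiOf x) := by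
  have := isCompact_univ.continuous_sSup (f := fun γ (δ : D) => x (γ, δ)) hx
  simp only [image_univ] at this
  exact this

theorem bddBelow_range_phiOf [CompactSpace G] [CompactSpace D] (hx : Continuous x) :
    BddBelow (range (phiOf x)) :=
  (isCompact_range (continuous_phiOf hx)).bddBelow

end Compact

section Perturbation

variable {ι D : Type*} [TopologicalSpace D] {l : Filter ι} {f g : D → ℝ} {t : ι → ℝ} {δ : ι → D}

theorem isMaxOn_of_mapClusterPt (hf : Continuous f) (hg : Continuous g)
    (ht : Tendsto t l (𝓝 0)) (hδ : ∀ i, IsMaxOn (fun z => f z + t i * g z) univ (δ i))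
    {z₀ : D} (hz₀ : MapClusterPt z₀ l δ) : IsMaxOn f univ z₀ := by
  obtain ⟨U, hUl, hU⟩ := mapClusterPt_iff_ultrafilter.mp hz₀
  intro z _
  have htU : Tendsto t U (𝓝 0) := ht.mono_left hUl
  have hlim : Tendsto (fun i => f (δ i) + t i * g (δ i)) U (𝓝 (f z₀ + 0 * g z₀)) :=
    ((hf.tendsto z₀).comp hU).add (htU.mul ((hg.tendsto z₀).comp hU))
  have hlim_z : Tendsto (fun i => f z + t i * g z) U (𝓝 (f z + 0 * g z)) :=
    tendsto_const_nhds.add (htU.mul tendsto_const_nhds)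
  simpa using le_of_tendsto_of_tendsto' hlim_z hlim fun i => hδ i (mem_univ z)

theorem eventually_lt_of_isMaxOn_add_mul [CompactSpace D] (hf : Continuous f) (hg : Continuous g)
    (ht : Tendsto t l (𝓝 0)) (hδ : ∀ i, IsMaxOn (fun z => f z + t i * g z) univ (δ i))
    {b : ℝ} (hb : ∀ z, IsMaxOn f univ z → g z < b) : ∀ᶠ i in l, g (δ i) < b := by
  by_contra hfreq
  have hfreq' : ∃ᶠ i in l, b ≤ g (δ i) := by
    simpa only [not_eventually, not_lt] using hfreq
  obtain ⟨z₀, hbz₀, hz₀⟩ :=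
    (isClosed_le continuous_const hg).isCompact.exists_mapClusterPt_of_frequently hfreq'
  exact (hb z₀ (isMaxOn_of_mapClusterPt hf hg ht hδ hz₀)).not_ge hbz₀

end Perturbation

section DifferenceQuotient

variable {ι G D : Type*} [TopologicalSpace G] [TopologicalSpace D] [CompactSpace G]
  [CompactSpace D] {x h : G × D → ℝ} {l : Filter ι} [l.NeBot] {t : ι → ℝ}

theorem limsup_differenceQuotient_VOf_le (hx : Continuous x) (hh : Continuous h)
    (ht : ∀ i, 0 < t i) (htl : Tendsto t l (𝓝 0)) {γ₀ : G} (hγ₀ : γ₀ ∈ Gamma0Of x) :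
    limsup (fun i => (t i)⁻¹ * (VOf (x + t i • h) - VOf x)) l ≤
      ⨆ δ : Delta0Of x γ₀, h (γ₀, δ.1) := by
  have : Nonempty G := ⟨γ₀⟩
  have : Nonempty D := ⟨hγ₀.choose⟩
  have hcont : ∀ i, Continuous (x + t i • h) := fun i => hx.add (hh.const_smul (t i))
  choose δ hδ using fun i => isCompact_univ.exists_isMaxOn univ_nonempty
    ((hcont i).comp (Continuous.prodMk_right γ₀)).continuousOn
  have hmax : ∀ i, IsMaxOn (fun z => x (γ₀, z) + t i * h (γ₀, z)) univ (δ i) :=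
    fun i => (hδ i).2
  have upper : ∀ i, (t i)⁻¹ * (VOf (x + t i • h) - VOf x) ≤ h (γ₀, δ i) := by
    intro i
    rw [inv_mul_le_iff₀ (ht i)]
    simpa using VOf_sub_VOf_le (bddBelow_range_phiOf (hcont i)) hγ₀
      (bddAbove_range_slice hx γ₀) (hmax i)
  obtain ⟨m, hm⟩ := (isCompact_range hh).bddBelow
  have lower : ∀ i, m ≤ (t i)⁻¹ * (VOf (x + t i • h) - VOf x) := by
    intro i
    rw [le_inv_mul_iff₀ (ht i), le_sub_iff_add_le']
    refine VOf_add_le_VOf (bddBelow_range_phiOf hx) (bddAbove_range_slice (hcont i)) fun p => ?_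
    simpa using mul_le_mul_of_nonneg_left (hm (mem_range_self p)) (ht i).le
  have hbdd : BddAbove (range fun δ : Delta0Of x γ₀ => h (γ₀, δ.1)) :=
    (isCompact_range hh).bddAbove.mono (range_subset_iff.mpr fun _ => mem_range_self _)
  refine le_of_forall_gt_imp_ge_of_dense fun b hb => ?_
  refine limsup_le_of_le (isCoboundedUnder_le_of_le l lower) ?_
  refine (eventually_lt_of_isMaxOn_add_mul (hx.comp (Continuous.prodMk_right γ₀))
    (hh.comp (Continuous.prodMk_right γ₀)) htl hmax fun z hz => ?_).mono
    fun i hi => (upper i).trans hi.le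
  exact (le_ciSup hbdd ⟨z, mem_Delta0Of_of_isMaxOn hz⟩).trans_lt hb

end DifferenceQuotient

theorem statement_19_general {dγ dδ : ℕ}
    (Γ : Set (EuclideanSpace ℝ (Fin dγ))) (Δ : Set (EuclideanSpace ℝ (Fin dδ)))
    (hΓc : IsCompact Γ) (hΔc : IsCompact Δ)
    (x h : ↥Γ × ↥Δ → ℝ) (hx : Continuous x) (hh : Continuous h)
    (hΘ0 : (Theta0Of x).Nonempty)
    (t : ℕ → ℝ) (ht : ∀ n, 0 < t n) (htlim : Tendsto t atTop (𝓝 0)) :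
    Filter.limsup
        (fun n => (t n)⁻¹ *
          ((⨅ γ : ↥Γ, ⨆ δ : ↥Δ, (x + t n • h) (γ, δ)) - ⨅ γ : ↥Γ, ⨆ δ : ↥Δ, x (γ, δ)))
        atTop ≤
      ⨅ γ : ↥(Gamma0Of x), ⨆ δ : ↥(Delta0Of x γ.1), h (γ.1, δ.1) := by
  have := isCompact_iff_compactSpace.mp hΓc
  have := isCompact_iff_compactSpace.mp hΔc
  obtain ⟨⟨γ, δ⟩, hθ⟩ := hΘ0
  have : Nonempty (Gamma0Of x) := ⟨⟨γ, δ, hθ⟩⟩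
  exact le_ciInf fun γ₀ => limsup_differenceQuotient_VOf_le hx hh ht htlim γ₀.2

/-- Γ, Δ compact nonempty, `x, h ∈ C(Γ×Δ)` with `Θ₀(x)` nonempty, `t n ↓ 0`,
and difference quotients `D n = (t n)⁻¹ [inf_γ sup_δ (x + t n h)(γ,δ) − inf_γ sup_δ x(γ,δ)]`.
Then `limsup_n D n ≤ inf_{γ∈Γ₀(x)} sup_{δ∈Δ₀(γ,x)} h(γ,δ)`. -/
theorem statement_19 {dγ dδ : ℕ}
    (Γ : Set (EuclideanSpace ℝ (Fin dγ))) (Δ : Set (EuclideanSpace ℝ (Fin dδ)))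
    (hΓc : IsCompact Γ) (hΔc : IsCompact Δ) (hΓne : Γ.Nonempty) (hΔne : Δ.Nonempty)
    (x h : ↥Γ × ↥Δ → ℝ) (hx : Continuous x) (hh : Continuous h)
    (hΘ0 : (Theta0Of x).Nonempty)
    (t : ℕ → ℝ) (ht : ∀ n, 0 < t n) (htanti : Antitone t) (htlim : Tendsto t atTop (𝓝 0)) :
    Filter.limsup
        (fun n => (t n)⁻¹ *
          ((⨅ γ : ↥Γ, ⨆ δ : ↥Δ, (x + t n • h) (γ, δ)) - ⨅ γ : ↥Γ, ⨆ δ : ↥Δ, x (γ, δ)))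
        atTop ≤
      ⨅ γ : ↥(Gamma0Of x), ⨆ δ : ↥(Delta0Of x γ.1), h (γ.1, δ.1) :=
  statement_19_general Γ Δ hΓc hΔc x h hx hh hΘ0 t ht htlim

end
end
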